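/- (Case a > 0, b < 2.) Let a > 0, b < 2, α > 0, δ > 0, μ > 0, T > 0, and let q₁, q₂, p₁, p₂ : [0, T) → ℝ be differentiable functions satisfying the 2-peakon ODE system with parameters a, b, with initial data p₁(0) = α + δ, p₂(0) = α, q₁(0) = 0, q₂(0) = μ. Suppose that for all t ∈ [0, T): p₁(t) > 0, p₂(t) > 0, 0 < q₂(t) − q₁(t) ≤ μ, and L_a(q₂(t) − q₁(t)) ≥ a, where L_a(r) = 1 − a − (1 − 3a)e^{−2r}. Then for all t ∈ [0, T): (p₂² − p₁²)′(t) < 0 and (q₂ − q₁)′(t) ≤ −a(2αδ + δ²) < 0. -/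
import Mathlib


open Real Set

/-- The 2-peakon ODE system with parameters `a`, `b`, holding (in the sense of derivatives
within `[0, T)`) at every point of `[0, T)`. `Real.sign` plays the role of `sgn`. -/
def PeakonODEOn (a b T : ℝ) (q₁ q₂ p₁ p₂ : ℝ → ℝ) : Prop :=
  ∀ t ∈ Set.Ico (0 : ℝ) T,
    HasDerivWithinAt q₁ ((1 - a) * p₁ t ^ 2 + 2 * p₁ t * p₂ t * Real.exp (-|q₁ t - q₂ t|)
      + (1 - 3 * a) * p₂ t ^ 2 * Real.exp (-(2 * |q₁ t - q₂ t|))) (Set.Ico 0 T) t ∧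
    HasDerivWithinAt q₂ ((1 - a) * p₂ t ^ 2 + 2 * p₁ t * p₂ t * Real.exp (-|q₁ t - q₂ t|)
      + (1 - 3 * a) * p₁ t ^ 2 * Real.exp (-(2 * |q₁ t - q₂ t|))) (Set.Ico 0 T) t ∧
    HasDerivWithinAt p₁ ((2 - b) * Real.sign (q₂ t - q₁ t) * p₁ t * p₂ t * Real.exp (-|q₁ t - q₂ t|)
      * (p₁ t + p₂ t * Real.exp (-|q₁ t - q₂ t|))) (Set.Ico 0 T) t ∧
    HasDerivWithinAt p₂ ((2 - b) * Real.sign (q₁ t - q₂ t) * p₁ t * p₂ t * Real.exp (-|q₁ t - q₂ t|)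
      * (p₁ t * Real.exp (-|q₁ t - q₂ t|) + p₂ t)) (Set.Ico 0 T) t

/-- `L_a(r) = 1 - a - (1 - 3a)e^{-2r}`. -/
noncomputable def Lfun (a r : ℝ) : ℝ := 1 - a - (1 - 3 * a) * Real.exp (-(2 * r))

theorem case2_collision (a b α δ μ T : ℝ)
    (ha : 0 < a) (hb : b < 2) (hα : 0 < α) (hδ : 0 < δ) (hμ : 0 < μ) (hT : 0 < T)
    (q₁ q₂ p₁ p₂ : ℝ → ℝ)
    (hsys : PeakonODEOn a b T q₁ q₂ p₁ p₂)
    (hp₁0 : p₁ 0 = α + δ) (hp₂0 : p₂ 0 = α) (hq₁0 : q₁ 0 = 0) (hq₂0 : q₂ 0 = μ)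
    (hp₁pos : ∀ t ∈ Set.Ico (0 : ℝ) T, 0 < p₁ t)
    (hp₂pos : ∀ t ∈ Set.Ico (0 : ℝ) T, 0 < p₂ t)
    (hqrange : ∀ t ∈ Set.Ico (0 : ℝ) T, 0 < q₂ t - q₁ t ∧ q₂ t - q₁ t ≤ μ)
    (hL : ∀ t ∈ Set.Ico (0 : ℝ) T, a ≤ Lfun a (q₂ t - q₁ t)) :
    ∀ t ∈ Set.Ico (0 : ℝ) T,
      (∃ d : ℝ, HasDerivWithinAt (fun s => p₂ s ^ 2 - p₁ s ^ 2) d (Set.Ico 0 T) t ∧ d < 0) ∧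
      (∃ d : ℝ, HasDerivWithinAt (fun s => q₂ s - q₁ s) d (Set.Ico 0 T) t ∧
        d ≤ -(a * (2 * α * δ + δ ^ 2)) ∧ -(a * (2 * α * δ + δ ^ 2)) < 0) := by
  set D : ℝ → ℝ := fun s =>
    2 * p₂ s ^ 1 * ((2 - b) * Real.sign (q₁ s - q₂ s) * p₁ s * p₂ s
        * Real.exp (-|q₁ s - q₂ s|)
        * (p₁ s * Real.exp (-|q₁ s - q₂ s|) + p₂ s))
      - 2 * p₁ s ^ 1 * ((2 - b) * Real.sign (q₂ s - q₁ s) * p₁ s * p₂ s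
        * Real.exp (-|q₁ s - q₂ s|)
        * (p₁ s + p₂ s * Real.exp (-|q₁ s - q₂ s|))) with hD
  have key : ∀ s ∈ Set.Ico (0 : ℝ) T,
      HasDerivWithinAt (fun u => p₂ u ^ 2 - p₁ u ^ 2) (D s) (Set.Ico 0 T) s ∧ D s < 0 := by
    intro s hs
    obtain ⟨hq₁d, hq₂d, hp₁d, hp₂d⟩ := hsys s hs
    refine ⟨(hp₂d.pow 2).sub (hp₁d.pow 2), ?_⟩
    have hQ := (hqrange s hs).1
    have hs1 : Real.sign (q₂ s - q₁ s) = 1 := Real.sign_of_pos hQ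
    have hs2 : Real.sign (q₁ s - q₂ s) = -1 := Real.sign_of_neg (by linarith)
    have h1 := hp₁pos s hs
    have h2 := hp₂pos s hs
    have hE : 0 < Real.exp (-|q₁ s - q₂ s|) := Real.exp_pos _
    rw [hD]
    simp only [hs1, hs2]
    nlinarith [mul_pos (mul_pos (mul_pos (mul_pos (by linarith : (0:ℝ) < 2 - b) h1) h2) hE)
      (by nlinarith [pow_pos h1 2, pow_pos h2 2, mul_pos (mul_pos h1 hE) h2,
          mul_pos (mul_pos h1 h2) hE] :
        0 < p₁ s * Real.exp (-|q₁ s - q₂ s|) * p₂ s + p₂ s ^ 2 + p₁ s ^ 2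
        + p₁ s * p₂ s * Real.exp (-|q₁ s - q₂ s|))]
  have contX : ContinuousOn (fun u => p₂ u ^ 2 - p₁ u ^ 2) (Set.Ico 0 T) :=
    fun s hs => ((key s hs).1).continuousWithinAt
  have anti : StrictAntiOn (fun u => p₂ u ^ 2 - p₁ u ^ 2) (Set.Ico 0 T) := by
    apply strictAntiOn_of_deriv_neg (convex_Ico 0 T) contX
    intro s hs
    rw [interior_Ico] at hs
    have hs' : s ∈ Set.Ico (0:ℝ) T := ⟨hs.1.le, hs.2⟩
    have hnb : Set.Ico (0:ℝ) T ∈ nhds s := Ico_mem_nhds hs.1 hs.2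
    have := ((key s hs').1.hasDerivAt hnb).deriv
    rw [this]
    exact (key s hs').2
  have hXle : ∀ t ∈ Set.Ico (0:ℝ) T, p₂ t ^ 2 - p₁ t ^ 2 ≤ -(2 * α * δ + δ ^ 2) := by
    intro t ht
    have h0 : (0:ℝ) ∈ Set.Ico (0:ℝ) T := ⟨le_refl _, hT⟩
    rcases eq_or_lt_of_le ht.1 with h | h
    · rw [← h, hp₁0, hp₂0]; ring_nf; nlinarith
    · have := (anti h0 ht h).le
      simp only [hp₁0, hp₂0] at this
      nlinarith
  intro t ht
  refine ⟨⟨D t, (key t ht).1, (key t ht).2⟩, ?_⟩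
  obtain ⟨hq₁d, hq₂d, hp₁d, hp₂d⟩ := hsys t ht
  refine ⟨_, hq₂d.sub hq₁d, ?_, by nlinarith [mul_pos hα hδ, pow_pos hδ 2, mul_pos ha (by nlinarith [mul_pos hα hδ, pow_pos hδ 2] : (0:ℝ) < 2 * α * δ + δ ^ 2)]⟩
  have hQ := (hqrange t ht).1
  have habs : |q₁ t - q₂ t| = q₂ t - q₁ t := by
    rw [abs_of_neg (by linarith)]; ring
  have hLt := hL t ht
  have hX := hXle t ht
  rw [habs]
  have heq : (1 - a) * p₂ t ^ 2 + 2 * p₁ t * p₂ t * Real.exp (-(q₂ t - q₁ t))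
      + (1 - 3 * a) * p₁ t ^ 2 * Real.exp (-(2 * (q₂ t - q₁ t)))
      - ((1 - a) * p₁ t ^ 2 + 2 * p₁ t * p₂ t * Real.exp (-(q₂ t - q₁ t))
      + (1 - 3 * a) * p₂ t ^ 2 * Real.exp (-(2 * (q₂ t - q₁ t))))
      = (p₂ t ^ 2 - p₁ t ^ 2) * Lfun a (q₂ t - q₁ t) := by
    rw [Lfun]; ring
  rw [heq]
  have hC : (0:ℝ) < 2 * α * δ + δ ^ 2 := by nlinarith
  nlinarith [mul_nonneg (by linarith : (0:ℝ) ≤ -(2 * α * δ + δ ^ 2) - (p₂ t ^ 2 - p₁ t ^ 2))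
      (by linarith : (0:ℝ) ≤ Lfun a (q₂ t - q₁ t)),
    mul_nonneg hC.le (by linarith : (0:ℝ) ≤ Lfun a (q₂ t - q₁ t) - a)]
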